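/- Let H be a finite group, ḡ ∈ H^r and ḡ' ∈ H^n tuples of elements of H. Assume ⟨ḡ'⟩ = H, and that for every conjugacy class c of H, writing n(c) for the number of entries of ḡ lying in c, either n(c) = 0 or at least |c|·ord(c) + n(c) entries of ḡ' lie in c, where ord(c) is the common order of the elements of c. Then there exists a tuple ḡ'' ∈ H^{n−r} such that ⟨ḡ''⟩ = H and ḡ' is braid-equivalent to the concatenation ḡ·ḡ''. -/
import Mathlib

open scoped Classical

/-- One Hurwitz braid move: replace adjacent entries `a, b` by `a*b*a⁻¹, a`. -/
inductive BraidMove (G : Type*) [Group G] : List G → List G → Prop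
  | mk (l₁ l₂ : List G) (a b : G) :
      BraidMove G (l₁ ++ a :: b :: l₂) (l₁ ++ (a * b * a⁻¹) :: a :: l₂)

/-- Braid equivalence of tuples: the equivalence relation generated by Hurwitz moves. -/
def BraidEquiv (G : Type*) [Group G] : List G → List G → Prop :=
  Relation.EqvGen (BraidMove G)

section Aux

variable {G : Type*} [Group G]

lemma BraidEquiv.refl (l : List G) : BraidEquiv G l l := Relation.EqvGen.refl l

lemma BraidEquiv.symm {l l' : List G} (h : BraidEquiv G l l') : BraidEquiv G l' l :=
  Relation.EqvGen.symm _ _ h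

lemma BraidEquiv.trans {l₁ l₂ l₃ : List G} (h : BraidEquiv G l₁ l₂) (h' : BraidEquiv G l₂ l₃) :
    BraidEquiv G l₁ l₃ := Relation.EqvGen.trans _ _ _ h h'

lemma BraidMove.appendCongr {l l' : List G} (p s : List G) (h : BraidMove G l l') :
    BraidMove G (p ++ l ++ s) (p ++ l' ++ s) := by
  cases h with
  | mk l₁ l₂ a b =>
    have := BraidMove.mk (G := G) (p ++ l₁) (l₂ ++ s) a b
    simpa [List.append_assoc] using this

lemma BraidEquiv.appendCongr {l l' : List G} (p s : List G) (h : BraidEquiv G l l') :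
    BraidEquiv G (p ++ l ++ s) (p ++ l' ++ s) := by
  induction h with
  | rel x y hxy => exact Relation.EqvGen.rel _ _ (hxy.appendCongr p s)
  | refl x => exact BraidEquiv.refl _
  | symm x y _ ih => exact ih.symm
  | trans x y z _ _ ih₁ ih₂ => exact ih₁.trans ih₂

/-- Move a single element to the left of a block, conjugating the block. -/
lemma braid_cons_block (a : G) : ∀ B : List G,
    BraidEquiv G (a :: B) (B.map (fun x => a * x * a⁻¹) ++ [a]) := by
  intro B
  induction B with
  | nil => exact BraidEquiv.refl _
  | cons b B ih =>
    have h₁ : BraidEquiv G (a :: b :: B) ((a * b * a⁻¹) :: a :: B) :=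
      Relation.EqvGen.rel _ _ (by simpa using BraidMove.mk (G := G) [] B a b)
    have h₂ : BraidEquiv G ((a * b * a⁻¹) :: (a :: B))
        ((a * b * a⁻¹) :: (B.map (fun x => a * x * a⁻¹) ++ [a])) := by
      simpa using ih.appendCongr [a * b * a⁻¹] []
    exact h₁.trans (by simpa using h₂)

/-- Push a block left past a single element on its right. -/
lemma braid_block_push (a : G) : ∀ B : List G,
    BraidEquiv G (B ++ [a]) ((B.prod * a * B.prod⁻¹) :: B) := by
  intro B
  induction B with
  | nil => simpa using BraidEquiv.refl [a]
  | cons x B ih =>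
    have h₁ : BraidEquiv G (x :: (B ++ [a])) (x :: ((B.prod * a * B.prod⁻¹) :: B)) := by
      simpa using ih.appendCongr [x] []
    have h₂ : BraidEquiv G (x :: (B.prod * a * B.prod⁻¹) :: B)
        ((x * (B.prod * a * B.prod⁻¹) * x⁻¹) :: x :: B) :=
      Relation.EqvGen.rel _ _ (by simpa using BraidMove.mk (G := G) [] B x (B.prod * a * B.prod⁻¹))
    have h₃ := h₁.trans h₂
    have : (x * (B.prod * a * B.prod⁻¹) * x⁻¹) = ((x :: B).prod * a * (x :: B).prod⁻¹) := by
      simp [List.prod_cons, mul_assoc]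
    rw [this] at h₃
    simpa using h₃

/-- A block with product 1 commutes freely to the right. -/
lemma braid_block_comm {B : List G} (hB : B.prod = 1) : ∀ l : List G,
    BraidEquiv G (B ++ l) (l ++ B) := by
  intro l
  induction l with
  | nil => simpa using BraidEquiv.refl B
  | cons c l ih =>
    have h₁ : BraidEquiv G ((B ++ [c]) ++ l) (((B.prod * c * B.prod⁻¹) :: B) ++ l) :=
      (braid_block_push c B).appendCongr [] l
    rw [hB] at h₁
    simp only [one_mul, inv_one, mul_one] at h₁
    have h₂ : BraidEquiv G (c :: (B ++ l)) (c :: (l ++ B)) := by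
      simpa using ih.appendCongr [c] []
    have h₃ : BraidEquiv G (B ++ c :: l) ((B ++ [c]) ++ l) := by
      rw [List.append_assoc]; exact BraidEquiv.refl _
    exact (h₃.trans h₁).trans (by simpa using h₂)

lemma prod_map_conj (z : G) (B : List G) :
    (B.map (fun x => z * x * z⁻¹)).prod = z * B.prod * z⁻¹ := by
  have := map_list_prod (MulAut.conj z).toMonoidHom B
  simpa [MulAut.conj] using this.symm

/-- Conjugate a product-1 block sitting to the right of `l` by any element of `⟨l⟩`. -/
lemma braid_conj_block (l : List G) {z : G} (hz : z ∈ Subgroup.closure {x : G | x ∈ l}) :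
    ∀ B : List G, B.prod = 1 →
      BraidEquiv G (l ++ B) (l ++ B.map (fun x => z * x * z⁻¹)) := by
  induction hz using Subgroup.closure_induction with
  | mem a ha =>
    intro B hB
    obtain ⟨l₁, l₂, rfl⟩ := List.append_of_mem ha
    have hmapprod : (B.map (fun x => a * x * a⁻¹)).prod = 1 := by
      rw [prod_map_conj, hB]; simp
    -- l₁ ++ a :: (l₂ ++ B) ~ l₁ ++ a :: (B ++ l₂)
    have h₁ : BraidEquiv G (l₁ ++ a :: (l₂ ++ B)) (l₁ ++ a :: (B ++ l₂)) := by
      simpa using ((braid_block_comm hB l₂).symm).appendCongr (l₁ ++ [a]) []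
    -- l₁ ++ (a :: B) ++ l₂ ~ l₁ ++ (map B ++ [a]) ++ l₂
    have h₂ : BraidEquiv G (l₁ ++ (a :: B) ++ l₂)
        (l₁ ++ (B.map (fun x => a * x * a⁻¹) ++ [a]) ++ l₂) :=
      (braid_cons_block a B).appendCongr l₁ l₂
    -- map B ++ (a :: l₂) ~ (a :: l₂) ++ map B
    have h₃ : BraidEquiv G (l₁ ++ (B.map (fun x => a * x * a⁻¹) ++ (a :: l₂)))
        (l₁ ++ ((a :: l₂) ++ B.map (fun x => a * x * a⁻¹))) := by
      simpa using (braid_block_comm hmapprod (a :: l₂)).appendCongr l₁ []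
    have := (h₁.trans (by simpa [List.append_assoc] using h₂)).trans
      (by simpa [List.append_assoc] using h₃)
    simpa [List.append_assoc] using this
  | one =>
    intro B hB
    simpa using BraidEquiv.refl (l ++ B)
  | mul x y hx hy ihx ihy =>
    intro B hB
    have h₁ := ihy B hB
    have hyprod : (B.map (fun b => y * b * y⁻¹)).prod = 1 := by
      rw [prod_map_conj, hB]; simp
    have h₂ := ihx _ hyprod
    refine h₁.trans ?_
    have : (B.map (fun b => y * b * y⁻¹)).map (fun b => x * b * x⁻¹)
        = B.map (fun b => (x * y) * b * (x * y)⁻¹) := by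
      rw [List.map_map]; apply List.map_congr_left; intro b _
      simp [mul_assoc]
    rw [this] at h₂
    exact h₂
  | inv x hx ihx =>
    intro B hB
    have hprod : (B.map (fun b => x⁻¹ * b * x)).prod = 1 := by
      have := prod_map_conj x⁻¹ B
      simp only [inv_inv] at this
      rw [this, hB]; simp
    have h := ihx (B.map (fun b => x⁻¹ * b * x)) hprod
    have : (B.map (fun b => x⁻¹ * b * x)).map (fun b => x * b * x⁻¹) = B := by
      rw [List.map_map]
      have : ((fun b => x * b * x⁻¹) ∘ fun b => x⁻¹ * b * x) = id := by
        funext b; simp [mul_assoc]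
      rw [this, List.map_id]
    rw [this] at h
    have heq : B.map (fun b => x⁻¹ * b * x) = B.map (fun b => x⁻¹ * b * x⁻¹⁻¹) := by
      simp
    exact h.symm.trans (by rw [← heq]; exact BraidEquiv.refl _)

/-- Braid equivalence preserves the count of any conjugation-invariant predicate. -/
lemma BraidEquiv.countP_eq {p : G → Bool} (hp : ∀ a b : G, p (a * b * a⁻¹) = p b)
    {l l' : List G} (h : BraidEquiv G l l') : l.countP p = l'.countP p := by
  induction h with
  | rel x y hxy =>
    cases hxy with
    | mk l₁ l₂ a b => simp [List.countP_append, List.countP_cons, hp]; omega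
  | refl x => rfl
  | symm x y _ ih => omega
  | trans x y z _ _ ih₁ ih₂ => omega

/-- Braid equivalence preserves the subgroup generated by the entries. -/
lemma BraidEquiv.closure_eq {l l' : List G} (h : BraidEquiv G l l') :
    Subgroup.closure {x : G | x ∈ l} = Subgroup.closure {x : G | x ∈ l'} := by
  induction h with
  | rel x y hxy =>
    cases hxy with
    | mk l₁ l₂ a b =>
      apply le_antisymm
      · rw [Subgroup.closure_le]
        intro x hx
        simp only [Set.mem_setOf_eq, List.mem_append, List.mem_cons] at hx
        rcases hx with (hx | hx | hx | hx)
        · exact Subgroup.subset_closure (by simp [hx])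
        · exact Subgroup.subset_closure (by simp [hx])
        · have ha : a ∈ Subgroup.closure {x : G | x ∈ l₁ ++ (a * b * a⁻¹) :: a :: l₂} :=
            Subgroup.subset_closure (by simp)
          have hc : a * b * a⁻¹ ∈ Subgroup.closure {x : G | x ∈ l₁ ++ (a * b * a⁻¹) :: a :: l₂} :=
            Subgroup.subset_closure (by simp)
          have : a⁻¹ * (a * b * a⁻¹) * a ∈
              Subgroup.closure {x : G | x ∈ l₁ ++ (a * b * a⁻¹) :: a :: l₂} :=
            mul_mem (mul_mem (inv_mem ha) hc) ha
          simpa [hx, mul_assoc] using this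
        · exact Subgroup.subset_closure (by simp [hx])
      · rw [Subgroup.closure_le]
        intro x hx
        simp only [Set.mem_setOf_eq, List.mem_append, List.mem_cons] at hx
        rcases hx with (hx | hx | hx | hx)
        · exact Subgroup.subset_closure (by simp [hx])
        · have ha : a ∈ Subgroup.closure {x : G | x ∈ l₁ ++ a :: b :: l₂} :=
            Subgroup.subset_closure (by simp)
          have hb : b ∈ Subgroup.closure {x : G | x ∈ l₁ ++ a :: b :: l₂} :=
            Subgroup.subset_closure (by simp)
          have : a * b * a⁻¹ ∈ Subgroup.closure {x : G | x ∈ l₁ ++ a :: b :: l₂} :=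
            mul_mem (mul_mem ha hb) (inv_mem ha)
          rw [hx]; exact this
        · exact Subgroup.subset_closure (by simp [hx])
        · exact Subgroup.subset_closure (by simp [hx])
  | refl x => rfl
  | symm x y _ ih => exact ih.symm
  | trans x y z _ _ ih₁ ih₂ => exact ih₁.trans ih₂

/-- Pull one copy of `y` to the right end, preserving the count of `y` among the rest. -/
lemma braid_pull_one {y : G} {l : List G} (hy : y ∈ l) :
    ∃ l' : List G, BraidEquiv G l (l' ++ [y]) ∧ l'.length + 1 = l.length ∧
      l'.count y + 1 = l.count y := by
  obtain ⟨l₁, l₂, rfl⟩ := List.append_of_mem hy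
  refine ⟨l₁ ++ l₂.map (fun x => y * x * y⁻¹), ?_, by simp; omega, ?_⟩
  · have := (braid_cons_block y l₂).appendCongr l₁ []
    simpa [List.append_assoc] using this
  · have hinj : Function.Injective (fun x : G => y * x * y⁻¹) := by
      intro a b hab
      simpa using hab
    have : (l₂.map (fun x : G => y * x * y⁻¹)).count y = l₂.count y := by
      have := List.count_map_of_injective l₂ (fun x : G => y * x * y⁻¹) hinj y
      simpa using this
    simp [List.count_append, this, List.count_cons]
    omega

/-- Pull `k` copies of `y` to the right end. -/
lemma braid_pull_many (y : G) : ∀ (k : ℕ) (l : List G), k ≤ l.count y →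
    ∃ l' : List G, BraidEquiv G l (l' ++ List.replicate k y) ∧ l'.length + k = l.length ∧
      l'.count y + k = l.count y := by
  intro k
  induction k with
  | zero => intro l _; exact ⟨l, by simpa using BraidEquiv.refl l, by simp, by simp⟩
  | succ k ih =>
    intro l hk
    have hy : y ∈ l := by
      have : 0 < l.count y := by omega
      exact List.count_pos_iff.mp this
    obtain ⟨l₁, h₁, hlen₁, hcnt₁⟩ := braid_pull_one hy
    obtain ⟨l₂, h₂, hlen₂, hcnt₂⟩ := ih l₁ (by omega)
    refine ⟨l₂, ?_, by omega, by omega⟩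
    have h₃ : BraidEquiv G (l₁ ++ [y]) ((l₂ ++ List.replicate k y) ++ [y]) := by
      simpa using h₂.appendCongr [] [y]
    have heq : (l₂ ++ List.replicate k y) ++ [y] = l₂ ++ List.replicate (k + 1) y := by
      rw [List.append_assoc, ← List.replicate_succ']
    rw [heq] at h₃
    exact h₁.trans h₃

end Aux

section Main

variable {G : Type*} [Group G] [Fintype G]

omit [Fintype G] in
lemma orderOf_of_isConj {h y : G} (hc : IsConj h y) : orderOf y = orderOf h := by
  obtain ⟨c, hc⟩ := isConj_iff.mp hc
  have : SemiconjBy c h y := by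
    rw [SemiconjBy, ← hc]; group
  exact (this.orderOf_eq).symm

lemma pigeonhole_conj (h : G) (l : List G)
    (hN : Nat.card {x : G | IsConj h x} * orderOf h + 1 ≤
      l.countP (fun x => decide (IsConj h x))) :
    ∃ y : G, IsConj h y ∧ orderOf h + 1 ≤ l.count y := by
  by_contra hcon
  push_neg at hcon
  have hcon' : ∀ y : G, IsConj h y → l.count y ≤ orderOf h := by
    intro y hy
    have := hcon y hy
    omega
  set p : G → Bool := fun x => decide (IsConj h x) with hp
  have hcount : l.countP p = ∑ a ∈ (l.filter p).toFinset, (l.filter p).count a := by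
    rw [List.countP_eq_length_filter]
    have := Multiset.toFinset_sum_count_eq (↑(l.filter p) : Multiset G)
    simpa using this.symm
  have hbound : ∀ a ∈ (l.filter p).toFinset, (l.filter p).count a ≤ orderOf h := by
    intro a ha
    rw [List.mem_toFinset, List.mem_filter] at ha
    have hpa : p a = true := ha.2
    rw [List.count_filter hpa]
    exact hcon' a (by simpa [hp] using hpa)
  have hsub : (l.filter p).toFinset ⊆ Finset.univ.filter (fun x => IsConj h x) := by
    intro a ha
    rw [List.mem_toFinset, List.mem_filter] at ha
    simp only [Finset.mem_filter, Finset.mem_univ, true_and]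
    simpa [hp] using ha.2
  have hcard : (Finset.univ.filter (fun x : G => IsConj h x)).card
      = Nat.card {x : G | IsConj h x} := by
    rw [Nat.card_eq_fintype_card]
    simp [Fintype.card_subtype]
  have : l.countP p ≤ Nat.card {x : G | IsConj h x} * orderOf h := by
    calc l.countP p = ∑ a ∈ (l.filter p).toFinset, (l.filter p).count a := hcount
      _ ≤ ∑ _a ∈ (l.filter p).toFinset, orderOf h := Finset.sum_le_sum hbound
      _ = (l.filter p).toFinset.card * orderOf h := by rw [Finset.sum_const, smul_eq_mul]
      _ ≤ (Finset.univ.filter (fun x : G => IsConj h x)).card * orderOf h :=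
          Nat.mul_le_mul_right _ (Finset.card_le_card hsub)
      _ = Nat.card {x : G | IsConj h x} * orderOf h := by rw [hcard]
  omega

lemma braid_step (h : G) (g' : List G)
    (hgen : Subgroup.closure {x : G | x ∈ g'} = ⊤)
    (hN : Nat.card {x : G | IsConj h x} * orderOf h + 1 ≤
      g'.countP (fun x => decide (IsConj h x))) :
    ∃ t : List G, BraidEquiv G g' (h :: t) ∧ Subgroup.closure {x : G | x ∈ t} = ⊤ ∧
      t.length + 1 = g'.length := by
  obtain ⟨y, hconj, hcy⟩ := pigeonhole_conj h g' hN
  set k := orderOf h with hk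
  have hkpos : 0 < k := orderOf_pos h
  have hyk : orderOf y = k := orderOf_of_isConj hconj
  obtain ⟨l', hbe, hlen, hcnt⟩ := braid_pull_many y k g' (by omega)
  have hyl' : y ∈ l' := List.count_pos_iff.mp (by omega)
  -- the pulled-out block has product 1
  have hprodY : (List.replicate k y).prod = 1 := by
    rw [List.prod_replicate, ← hyk, pow_orderOf_eq_one]
  -- the remaining entries generate
  have hsetEq : {x : G | x ∈ l' ++ List.replicate k y} = {x : G | x ∈ l'} := by
    ext x
    simp only [Set.mem_setOf_eq, List.mem_append, List.mem_replicate]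
    constructor
    · rintro (hx | ⟨-, rfl⟩)
      · exact hx
      · exact hyl'
    · exact fun hx => Or.inl hx
  have hgenl' : Subgroup.closure {x : G | x ∈ l'} = ⊤ := by
    rw [← hsetEq, ← hbe.closure_eq, hgen]
  -- conjugate the block to consist of copies of h
  obtain ⟨z, hz⟩ := isConj_iff.mp hconj.symm
  have hzmem : z ∈ Subgroup.closure {x : G | x ∈ l'} := by rw [hgenl']; trivial
  have hconjblock := braid_conj_block l' hzmem (List.replicate k y) hprodY
  have hmapeq : (List.replicate k y).map (fun x => z * x * z⁻¹) = List.replicate k h := by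
    rw [List.map_replicate, hz]
  rw [hmapeq] at hconjblock
  -- move the block of h's to the front
  have hprodH : (List.replicate k h).prod = 1 := by
    rw [List.prod_replicate, hk, pow_orderOf_eq_one]
  have hcomm : BraidEquiv G (l' ++ List.replicate k h) (List.replicate k h ++ l') :=
    (braid_block_comm hprodH l').symm
  refine ⟨List.replicate (k - 1) h ++ l', ?_, ?_, ?_⟩
  · have hrep : List.replicate k h = h :: List.replicate (k - 1) h := by
      conv_lhs => rw [show k = (k - 1) + 1 by omega]
      rw [List.replicate_succ]
    have := (hbe.trans hconjblock).trans hcomm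
    rwa [hrep] at this
  · rw [eq_top_iff, ← hgenl']
    apply Subgroup.closure_mono
    intro x hx
    simp only [Set.mem_setOf_eq, List.mem_append] at *
    exact Or.inr hx
  · simp only [List.length_append, List.length_replicate]
    omega

end Main

lemma conj_pred_invariant {G : Type*} [Group G] (h' : G) (a b : G) :
    decide (IsConj h' (a * b * a⁻¹)) = decide (IsConj h' b) := by
  simp only [decide_eq_decide]
  have hc : IsConj b (a * b * a⁻¹) := isConj_iff.mpr ⟨a, rfl⟩
  exact ⟨fun hh => hh.trans hc.symm, fun hh => hh.trans hc⟩

/-- factorization lemma: if `⟨ḡ'⟩ = H` and, for every conjugacy class `c`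
of `H`, either no entry of `ḡ` lies in `c` or at least `|c|·ord(c) + n(c)` entries of
`ḡ'` lie in `c` (where `n(c)` is the number of entries of `ḡ` in `c`), then
`ḡ' ∼ ḡ·ḡ''` for some tuple `ḡ''` of length `n − r` generating `H`. -/
theorem factorization_lemma {H : Type*} [Group H] [Fintype H]
    (g g' : List H)
    (hgen : Subgroup.closure {x : H | x ∈ g'} = ⊤)
    (hcond : ∀ h : H,
      g.countP (fun x => decide (IsConj h x)) = 0 ∨
        Nat.card {x : H | IsConj h x} * orderOf h + g.countP (fun x => decide (IsConj h x)) ≤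
          g'.countP (fun x => decide (IsConj h x))) :
    ∃ g'' : List H, g.length + g''.length = g'.length ∧
      Subgroup.closure {x : H | x ∈ g''} = ⊤ ∧
      BraidEquiv H g' (g ++ g'') := by
  induction g generalizing g' with
  | nil =>
    exact ⟨g', by simp, hgen, by simpa using BraidEquiv.refl g'⟩
  | cons h gt ih =>
    -- the condition at h gives many entries of g' conjugate to h
    have hhd : decide (IsConj h h) = true := decide_eq_true (IsConj.refl h)
    have hNpos : (h :: gt).countP (fun x => decide (IsConj h x)) ≠ 0 := by
      simp only [List.countP_cons, hhd, if_true]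
      omega
    have hN := (hcond h).resolve_left hNpos
    have hN1 : Nat.card {x : H | IsConj h x} * orderOf h + 1 ≤
        g'.countP (fun x => decide (IsConj h x)) := by
      have : 1 ≤ (h :: gt).countP (fun x => decide (IsConj h x)) := by
        simp only [List.countP_cons, hhd, if_true]; omega
      omega
    obtain ⟨t, hbe, hgt, hlen⟩ := braid_step h g' hgen hN1
    -- counts in t versus counts in g'
    have hcount : ∀ h' : H, g'.countP (fun x => decide (IsConj h' x)) =
        (h :: t).countP (fun x => decide (IsConj h' x)) := by
      intro h'
      apply hbe.countP_eq
      intro a b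
      simp only [decide_eq_decide]
      have hc : IsConj b (a * b * a⁻¹) := isConj_iff.mpr ⟨a, rfl⟩
      exact ⟨fun hh => hh.trans hc.symm, fun hh => hh.trans hc⟩
    have hcond' : ∀ h' : H,
        gt.countP (fun x => decide (IsConj h' x)) = 0 ∨
          Nat.card {x : H | IsConj h' x} * orderOf h' +
              gt.countP (fun x => decide (IsConj h' x)) ≤
            t.countP (fun x => decide (IsConj h' x)) := by
      intro h'
      rcases hcond h' with hzero | hle
      · left
        rw [List.countP_cons] at hzero
        omega
      · right
        rw [hcount h', List.countP_cons] at hle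
        rw [List.countP_cons] at hle
        omega
    obtain ⟨g'', hlen'', hgen'', hbe''⟩ := ih t hgt hcond'
    refine ⟨g'', ?_, hgen'', ?_⟩
    · simp only [List.length_cons] at *
      omega
    · have : BraidEquiv H (h :: t) (h :: (gt ++ g'')) := by
        simpa using hbe''.appendCongr [h] []
      exact hbe.trans (by simpa using this)
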